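/- arXiv:2109.06709 — 2 statements merged into one kernel-verified Lean document; each statement's English description precedes it below -/
import Mathlib

section
/- For every family H of functions from a finite set X to a finite set Y (with X nonempty and |X| ≥ 2), there exist x ≠ x' in X such that the probability over a uniformly random h ∈ H that h(x) = h(x') is at least (|X|/|Y| − 1)/(|X| − 1). -/
/-!
By Cauchy–Schwarz over the fibres, a single function `X → Y` has at least `|X|²/|Y|` ordered
colliding pairs, hence at least `|X|(|X|/|Y| - 1)` off-diagonal ones. Summing over the family and
double counting, some of the `|X|(|X| - 1)` off-diagonal pairs collides under at least the average
number `|H| (|X|/|Y| - 1)/(|X| - 1)` of the functions.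
-/

open Finset

namespace Finset

variable {α β : Type*} [Fintype α] [DecidableEq β]

theorem card_collisions_eq_sum_sq_card_fiber [Fintype β] (f : α → β) :
    #{p : α × α | f p.1 = f p.2} = ∑ b, #{a | f a = b} ^ 2 := by
  rw [card_eq_sum_card_fiberwise (f := fun p => f p.1) (t := univ) fun _ _ => mem_univ _]
  refine sum_congr rfl fun b _ => ?_
  rw [sq, ← card_product]
  congr 1
  ext ⟨x, y⟩
  simp only [mem_filter, mem_univ, true_and, mem_product]
  grind

theorem card_sq_le_card_mul_card_collisions [Fintype β] (f : α → β) :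
    Fintype.card α ^ 2 ≤ Fintype.card β * #{p : α × α | f p.1 = f p.2} := by
  rw [card_collisions_eq_sum_sq_card_fiber, ← card_univ (α := α),
    card_eq_sum_card_fiberwise (f := f) (t := univ) fun _ _ => mem_univ _]
  exact sq_sum_le_card_mul_sum_sq

theorem card_collisions_eq_card_offDiag_collisions_add [DecidableEq α] (f : α → β) :
    #{p : α × α | f p.1 = f p.2} = #{p ∈ univ.offDiag | f p.1 = f p.2} + Fintype.card α := by
  have hdiag : {p ∈ (univ : Finset α).diag | f p.1 = f p.2} = univ.diag :=
    filter_true_of_mem fun p hp => by rw [(mem_diag.1 hp).2]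
  rw [← univ_product_univ, ← diag_union_offDiag, filter_union,
    card_union_of_disjoint (disjoint_filter_filter (disjoint_diag_offDiag _)), hdiag, diag_card,
    card_univ, add_comm]

theorem card_mul_div_sub_one_le_card_offDiag_collisions [Fintype β] [Nonempty β] [DecidableEq α]
    (f : α → β) :
    (Fintype.card α : ℚ) * (Fintype.card α / Fintype.card β - 1) ≤
      #{p ∈ univ.offDiag | f p.1 = f p.2} := by
  have hβ : (0 : ℚ) < Fintype.card β := by exact_mod_cast Fintype.card_pos
  have h : (Fintype.card α : ℚ) ^ 2 ≤
      Fintype.card β * (#{p ∈ univ.offDiag | f p.1 = f p.2} + Fintype.card α) := by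
    exact_mod_cast card_collisions_eq_card_offDiag_collisions_add f ▸
      card_sq_le_card_mul_card_collisions f
  rw [mul_sub, mul_one, mul_div_assoc', sub_le_iff_le_add, div_le_iff₀ hβ]
  linarith

end Finset

/-- For every family `H` of functions from a finite set `X` (with `|X| ≥ 2`)
to a finite set `Y`, there exist `x ≠ x'` in `X` such that the probability over a uniformly
random `h ∈ H` that `h(x) = h(x')` is at least `(|X|/|Y| − 1)/(|X| − 1)`. -/
theorem stmt3 (X Y I : Type) [Fintype X] [Fintype Y] [Fintype I] [Nonempty I]
    [DecidableEq Y] (hX : 2 ≤ Fintype.card X) (H : I → X → Y) :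
    ∃ x x' : X, x ≠ x' ∧
      ((Finset.univ.filter (fun i : I => H i x = H i x')).card : ℚ) / (Fintype.card I : ℚ)
        ≥ ((Fintype.card X : ℚ) / (Fintype.card Y : ℚ) - 1) / ((Fintype.card X : ℚ) - 1) := by
  classical
  obtain ⟨x₀, x₁, hx⟩ := Fintype.exists_pair_of_one_lt_card hX
  have hY : Nonempty Y := ⟨H (Classical.arbitrary I) x₀⟩
  set P := (univ : Finset X).offDiag
  have hP : P.Nonempty := ⟨(x₀, x₁), by simpa [P] using hx⟩
  obtain ⟨p, hpP, hmax⟩ := P.exists_max_image (fun p => #{i | H i p.1 = H i p.2}) hP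
  have hcount := card_nsmul_le_card_nsmul (R := ℚ) (fun i p => H i p.1 = H i p.2)
    (s := univ) (t := P) (fun i _ => card_mul_div_sub_one_le_card_offDiag_collisions (H i))
    (n := #{i | H i p.1 = H i p.2}) fun q hq => by exact_mod_cast hmax q hq
  refine ⟨p.1, p.2, (mem_offDiag.1 hpP).2.2, ?_⟩
  have hN : (2 : ℚ) ≤ Fintype.card X := by exact_mod_cast hX
  have hI : (0 : ℚ) < Fintype.card I := by exact_mod_cast Fintype.card_pos
  have hPcard : (#P : ℚ) = Fintype.card X * (Fintype.card X - 1) := by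
    rw [offDiag_card, card_univ, Nat.cast_sub (Nat.le_mul_self _)]; push_cast; ring
  rw [card_univ, nsmul_eq_mul, nsmul_eq_mul, hPcard] at hcount
  rw [ge_iff_le, div_le_div_iff₀ (by linarith) hI]
  nlinarith
end

section
/- For all n, k, r ∈ ℕ with 2r ≤ n and k ≤ n, and all α ∈ F_2^n: if L is chosen uniformly among full-rank matrices in F_2^{k×n}, then the probability that f_{B}(α) ≠ g_B(L, Lα) is strictly less than 2^{−k + n·h(r/n)}, where B = B_n(0,r) is the Hamming ball of radius r around 0, f_B(α) = α if α ∈ B and ⊥ otherwise, and g_B(L, y) returns the first element s ∈ B with Ls = y, or ⊥ if none exists. -/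
/-!
If the decoder errs on `α`, some `s ≠ α` of the ball `B` collides with it: `L (s - α) = 0`.
Since the linear automorphisms act transitively on nonzero vectors, the number `c` of full-rank
`L` killing a fixed `u ≠ 0` does not depend on `u`, and double counting the pairs `(u, L)` gives
`c (2ⁿ - 1) = N (2ⁿ⁻ᵏ - 1)` for `N` the number of full-rank matrices, so `c < N 2⁻ᵏ`.
The union bound over `B` then bounds the error probability by `|B| 2⁻ᵏ`, and
`|B| ≤ 2^(n h(p))` for `p = r / n ≤ 1/2` because `|B| pʳ (1 - p)ⁿ⁻ʳ` is at most the total mass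
`∑ₛ p^|s| (1 - p)^(n - |s|) = 1` of the `p`-biased product measure.
-/

/-- Binary entropy with logarithm base 2 (with the convention `0 · log₂ 0 = 0`). -/
noncomputable def binEnt (p : ℝ) : ℝ :=
  -p * Real.logb 2 p - (1 - p) * Real.logb 2 (1 - p)

open Finset Matrix

theorem LinearEquiv.exists_apply_eq_of_ne_zero {K V : Type*} [Field K] [AddCommGroup V]
    [Module K V] {u w : V} (hu : u ≠ 0) (hw : w ≠ 0) : ∃ g : V ≃ₗ[K] V, g u = w := by
  obtain ⟨g, hg⟩ := Submodule.exists_linearEquiv_restrict_eq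
    ((LinearEquiv.toSpanNonzeroSingleton K V u hu).symm ≪≫ₗ
      LinearEquiv.toSpanNonzeroSingleton K V w hw)
  refine ⟨g, ?_⟩
  rw [← hg ⟨u, Submodule.mem_span_singleton_self u⟩, LinearEquiv.trans_apply,
    (toSpanNonzeroSingleton K V u hu).symm_apply_eq.mpr (toSpanNonzeroSingleton_one K V u hu).symm,
    toSpanNonzeroSingleton_one]

theorem Matrix.card_ker_mulVec {F m ι : Type*} [Field F] [Fintype F] [DecidableEq F]
    [Fintype m] [Fintype ι] [DecidableEq ι] (L : Matrix m ι F) :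
    #{v | L *ᵥ v = 0} = Fintype.card F ^ (Fintype.card ι - L.rank) := by
  have hker : #{v | L *ᵥ v = 0} = Nat.card (LinearMap.ker L.mulVecLin) := by
    rw [← Fintype.card_subtype, ← Nat.card_eq_fintype_card]
    exact Nat.card_congr (Equiv.subtypeEquivRight fun v => by simp)
  have hrank := L.mulVecLin.finrank_range_add_finrank_ker
  rw [Module.finrank_fintype_fun_eq_card] at hrank
  rw [hker, Module.natCard_eq_pow_finrank (K := F), Nat.card_eq_fintype_card, Matrix.rank]
  congr 1
  omega

section FullRank

variable (F : Type*) [Field F] [Fintype F] (k n : ℕ)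

noncomputable def fullRankMatrices : Finset (Matrix (Fin k) (Fin n) F) := {L | L.rank = k}

variable {F k n}

theorem mem_fullRankMatrices {L : Matrix (Fin k) (Fin n) F} :
    L ∈ fullRankMatrices F k n ↔ L.rank = k := by
  simp [fullRankMatrices]

theorem fullRankMatrices_nonempty (hkn : k ≤ n) : (fullRankMatrices F k n).Nonempty := by
  have := LinearIndependent.rank_matrix (M := of fun i => Pi.basisFun F (Fin n) (Fin.castLE hkn i))
    ((Pi.basisFun F (Fin n)).linearIndependent.comp _ (Fin.castLE_injective hkn))
  exact ⟨_, by simpa [mem_fullRankMatrices] using this⟩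

variable [DecidableEq F]

theorem card_fullRankMatrices_mulVec_eq_zero_eq {u w : Fin n → F} (hu : u ≠ 0) (hw : w ≠ 0) :
    #{L ∈ fullRankMatrices F k n | L *ᵥ u = 0} = #{L ∈ fullRankMatrices F k n | L *ᵥ w = 0} := by
  obtain ⟨g, hg⟩ := LinearEquiv.exists_apply_eq_of_ne_zero (K := F) hw hu
  set P := LinearMap.toMatrix' (g : (Fin n → F) →ₗ[F] Fin n → F)
  set Q := LinearMap.toMatrix' (g.symm : (Fin n → F) →ₗ[F] Fin n → F)
  have hPQ : P * Q = 1 := by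
    rw [← LinearMap.toMatrix'_comp]; simp
  have hQP : Q * P = 1 := by
    rw [← LinearMap.toMatrix'_comp]; simp
  have hP : P *ᵥ w = u := by simp [P, hg]
  have hQ : Q *ᵥ u = w := by simp [Q, ← hg]
  refine Finset.card_nbij' (· * P) (· * Q) (fun L hL => ?_) (fun L hL => ?_) ?_ ?_
  · simp only [coe_filter, mem_fullRankMatrices, Set.mem_ofPred_eq] at hL ⊢
    rwa [rank_mul_eq_left_of_isUnit_det _ _ (isUnit_det_of_left_inverse hQP), ← mulVec_mulVec, hP]
  · simp only [coe_filter, mem_fullRankMatrices, Set.mem_ofPred_eq] at hL ⊢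
    rwa [rank_mul_eq_left_of_isUnit_det _ _ (isUnit_det_of_left_inverse hPQ), ← mulVec_mulVec, hQ]
  · intro L _; simp [Matrix.mul_assoc, hPQ]
  · intro L _; simp [Matrix.mul_assoc, hQP]

theorem card_fullRankMatrices_mulVec_eq_zero_mul {u : Fin n → F} (hu : u ≠ 0) :
    #{L ∈ fullRankMatrices F k n | L *ᵥ u = 0} * (Fintype.card F ^ n - 1)
      = #(fullRankMatrices F k n) * (Fintype.card F ^ (n - k) - 1) := by
  have hcount := Finset.card_mul_eq_card_mul (s := univ.erase (0 : Fin n → F))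
    (t := fullRankMatrices F k n) (fun v L => L *ᵥ v = 0)
    (m := #{L ∈ fullRankMatrices F k n | L *ᵥ u = 0}) (n := Fintype.card F ^ (n - k) - 1)
    (fun v hv => card_fullRankMatrices_mulVec_eq_zero_eq (ne_of_mem_erase hv) hu)
    (fun L hL => by
      rw [bipartiteBelow, filter_erase, card_erase_of_mem (by simp), card_ker_mulVec,
        (mem_fullRankMatrices.mp hL), Fintype.card_fin])
  rwa [card_erase_of_mem (mem_univ _), card_univ, Fintype.card_fun, Fintype.card_fin,
    mul_comm] at hcount

theorem card_fullRankMatrices_mulVec_eq_zero_mul_pow_lt (hk : 1 ≤ k) (hkn : k ≤ n)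
    {u : Fin n → F} (hu : u ≠ 0) :
    #{L ∈ fullRankMatrices F k n | L *ᵥ u = 0} * Fintype.card F ^ k
      < #(fullRankMatrices F k n) := by
  set q := Fintype.card F
  set N := #(fullRankMatrices F k n)
  have hN : 0 < N := card_pos.mpr (fullRankMatrices_nonempty hkn)
  have hqk : 1 < q ^ k := Nat.one_lt_pow (by omega) Fintype.one_lt_card
  have hqkn : q ^ k ≤ q ^ n := Nat.pow_le_pow_right Fintype.card_pos hkn
  refine Nat.lt_of_mul_lt_mul_right (a := q ^ n - 1) ?_
  calc _ = N * (q ^ (n - k) - 1) * q ^ k := by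
        rw [mul_right_comm, card_fullRankMatrices_mulVec_eq_zero_mul hu]
    _ = N * (q ^ n - q ^ k) := by
        rw [mul_assoc, Nat.sub_mul, one_mul, ← pow_add, Nat.sub_add_cancel hkn]
    _ < N * (q ^ n - 1) := Nat.mul_lt_mul_of_pos_left (by omega) hN

theorem card_fullRankMatrices_collision_mul_pow_lt (hk : 1 ≤ k) (hkn : k ≤ n)
    {S : Finset (Fin n → F)} (hS : S.Nonempty) (α : Fin n → F) :
    #{L ∈ fullRankMatrices F k n | ∃ s ∈ S, s ≠ α ∧ L *ᵥ s = L *ᵥ α} * Fintype.card F ^ k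
      < #S * #(fullRankMatrices F k n) := by
  have : Nonempty (Fin n) := ⟨⟨0, by omega⟩⟩
  obtain ⟨e, he⟩ := exists_ne (0 : Fin n → F)
  set c := #{L ∈ fullRankMatrices F k n | L *ᵥ e = 0}
  have hunion : {L ∈ fullRankMatrices F k n | ∃ s ∈ S, s ≠ α ∧ L *ᵥ s = L *ᵥ α}
      ⊆ (S.erase α).biUnion fun s => {L ∈ fullRankMatrices F k n | L *ᵥ (s - α) = 0} := by
    intro L hL
    obtain ⟨hL, s, hs, hsα, hLs⟩ := mem_filter.mp hL
    exact mem_biUnion.mpr ⟨s, mem_erase.mpr ⟨hsα, hs⟩,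
      mem_filter.mpr ⟨hL, by rw [mulVec_sub, hLs, sub_self]⟩⟩
  have hcard : #{L ∈ fullRankMatrices F k n | ∃ s ∈ S, s ≠ α ∧ L *ᵥ s = L *ᵥ α} ≤ #S * c :=
    calc _ ≤ ∑ s ∈ S.erase α, #{L ∈ fullRankMatrices F k n | L *ᵥ (s - α) = 0} :=
          (card_le_card hunion).trans card_biUnion_le
      _ = #(S.erase α) * c := by
          rw [← smul_eq_mul, ← sum_const]
          exact sum_congr rfl fun s hs =>
            card_fullRankMatrices_mulVec_eq_zero_eq (sub_ne_zero.mpr (ne_of_mem_erase hs)) he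
      _ ≤ #S * c := Nat.mul_le_mul_right _ card_erase_le
  calc _ ≤ #S * c * Fintype.card F ^ k := Nat.mul_le_mul_right _ hcard
    _ = #S * (c * Fintype.card F ^ k) := mul_assoc _ _ _
    _ < #S * #(fullRankMatrices F k n) := Nat.mul_lt_mul_of_pos_left
        (card_fullRankMatrices_mulVec_eq_zero_mul_pow_lt hk hkn he) (card_pos.mpr hS)

end FullRank

theorem List.exists_mem_ne_apply_eq_of_find?_ne {α β : Type*} [DecidableEq α] [DecidableEq β]
    {l : List α} {a : α} {f : α → β}
    (h : (if a ∈ l then some a else none) ≠ l.find? fun s => decide (f s = f a)) :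
    ∃ s ∈ l, s ≠ a ∧ f s = f a := by
  cases hfind : l.find? fun s => decide (f s = f a) with
  | none =>
    have ha : a ∉ l := fun ha => by simpa using List.find?_eq_none.mp hfind a ha
    simp [hfind, ha] at h
  | some s =>
    have hs : f s = f a := by simpa using List.find?_some hfind
    refine ⟨s, List.mem_of_find?_eq_some hfind, ?_, hs⟩
    rintro rfl
    simp [hfind, List.mem_of_find?_eq_some hfind] at h

theorem prod_ite_eq_zero_eq_pow_hammingNorm {ι β M : Type*} [Fintype ι] [DecidableEq β] [Zero β]
    [CommMonoid M] (a b : M) (s : ι → β) :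
    ∏ i, (if s i = 0 then a else b) = b ^ hammingNorm s * a ^ (Fintype.card ι - hammingNorm s) := by
  have hzero : #{i | s i = 0} = Fintype.card ι - hammingNorm s :=
    Nat.eq_sub_of_add_eq (card_filter_add_card_filter_not (s := univ) _)
  rw [prod_ite, prod_const, prod_const, hzero, mul_comm]
  rfl

theorem sum_prod_ite_eq_zero_eq_one {ι : Type*} [Fintype ι] [DecidableEq ι] (p : ℝ) :
    ∑ s : ι → ZMod 2, ∏ i, (if s i = 0 then 1 - p else p) = 1 := by
  rw [← Fintype.prod_sum fun (_ : ι) (j : ZMod 2) => if j = 0 then 1 - p else p]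
  have : ∑ j : ZMod 2, (if j = 0 then 1 - p else p) = 1 := by
    change ∑ j : Fin 2, (if j = 0 then 1 - p else p) = 1
    simp [Fin.sum_univ_two]
  simp [this]

theorem pow_mul_pow_sub_le_pow_mul_pow_sub {a b : ℝ} (ha : 0 ≤ a) (hab : a ≤ b) {w r n : ℕ}
    (hwr : w ≤ r) (hrn : r ≤ n) : a ^ r * b ^ (n - r) ≤ a ^ w * b ^ (n - w) := by
  have hb : 0 ≤ b := ha.trans hab
  calc a ^ r * b ^ (n - r) = a ^ w * a ^ (r - w) * b ^ (n - r) := by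
        rw [← pow_add, Nat.add_sub_cancel' hwr]
    _ ≤ a ^ w * b ^ (r - w) * b ^ (n - r) := by gcongr
    _ = a ^ w * b ^ (n - w) := by rw [mul_assoc, ← pow_add]; congr 2; omega

theorem card_hammingBall_mul_le_one {n r : ℕ} (hrn : r ≤ n) {p : ℝ} (hp : 0 ≤ p)
    (hpq : p ≤ 1 - p) :
    (#{s : Fin n → ZMod 2 | hammingDist 0 s ≤ r} : ℝ) * (p ^ r * (1 - p) ^ (n - r)) ≤ 1 :=
  calc _ = ∑ s : Fin n → ZMod 2 with hammingDist 0 s ≤ r, p ^ r * (1 - p) ^ (n - r) := by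
        rw [sum_const, nsmul_eq_mul]
    _ ≤ ∑ s : Fin n → ZMod 2 with hammingDist 0 s ≤ r, ∏ i, (if s i = 0 then 1 - p else p) := by
        refine sum_le_sum fun s hs => ?_
        rw [prod_ite_eq_zero_eq_pow_hammingNorm, Fintype.card_fin]
        rw [mem_filter, hammingDist_zero_left] at hs
        exact pow_mul_pow_sub_le_pow_mul_pow_sub hp hpq hs.2 hrn
    _ ≤ ∑ s : Fin n → ZMod 2, ∏ i, (if s i = 0 then 1 - p else p) :=
        sum_le_sum_of_subset_of_nonneg (filter_subset _ _) fun _ _ _ =>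
          prod_nonneg fun i _ => by split_ifs <;> linarith
    _ = 1 := sum_prod_ite_eq_zero_eq_one p

theorem two_rpow_mul_binEnt {p : ℝ} (hp0 : 0 < p) (hp1 : p < 1) (x : ℝ) :
    (2 : ℝ) ^ (x * binEnt p) = (p ^ (x * p) * (1 - p) ^ (x * (1 - p)))⁻¹ := by
  rw [show x * binEnt p = -(Real.logb 2 p * (x * p) + Real.logb 2 (1 - p) * (x * (1 - p))) by
      unfold binEnt; ring,
    Real.rpow_neg zero_le_two, Real.rpow_add zero_lt_two, Real.rpow_mul zero_le_two,
    Real.rpow_mul zero_le_two, Real.rpow_logb zero_lt_two (by norm_num) hp0,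
    Real.rpow_logb zero_lt_two (by norm_num) (by linarith)]

theorem card_hammingBall_le_two_rpow {n r : ℕ} (h2r : 2 * r ≤ n) :
    (#{s : Fin n → ZMod 2 | hammingDist 0 s ≤ r} : ℝ) ≤ 2 ^ ((n : ℝ) * binEnt (r / n)) := by
  rcases Nat.eq_zero_or_pos r with rfl | hr
  · simp [binEnt, filter_eq']
  have hn : (0 : ℝ) < n := by exact_mod_cast (show 0 < n by omega)
  set p : ℝ := r / n
  have hnp : (n : ℝ) * p = r := mul_div_cancel₀ _ hn.ne'
  have hnq : (n : ℝ) * (1 - p) = ((n - r : ℕ) : ℝ) := by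
    rw [Nat.cast_sub (by omega), mul_one_sub, hnp]
  have hp0 : 0 < p := by positivity
  have hpq : p ≤ 1 - p := by
    rw [le_sub_iff_add_le, ← two_mul, ← mul_div_assoc, div_le_one hn]
    exact_mod_cast h2r
  rw [two_rpow_mul_binEnt hp0 (by linarith), hnp, hnq, Real.rpow_natCast, Real.rpow_natCast,
    ← one_div, le_div_iff₀ (mul_pos (pow_pos hp0 _) (pow_pos (by linarith) _))]
  exact card_hammingBall_mul_le_one (by omega) hp0.le hpq

theorem stmt7_general (n k r : ℕ) (h2r : 2 * r ≤ n) (hk : 1 ≤ k) (hkn : k ≤ n)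
    (α : Fin n → ZMod 2) (l : List (Fin n → ZMod 2))
    (hlB : l.toFinset
      = Finset.univ.filter (fun s : Fin n → ZMod 2 => hammingDist 0 s ≤ r)) :
    ((Finset.univ.filter (fun L : Matrix (Fin k) (Fin n) (ZMod 2) =>
        L.rank = k ∧
          (if hammingDist 0 α ≤ r then some α else none)
            ≠ l.find? (fun s => decide (L.mulVec s = L.mulVec α)))).card : ℝ)
      / ((Finset.univ.filter (fun L : Matrix (Fin k) (Fin n) (ZMod 2) =>
          L.rank = k)).card : ℝ)
      < (2 : ℝ) ^ (-(k : ℝ) + (n : ℝ) * binEnt ((r : ℝ) / (n : ℝ))) := by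
  have hmem : ∀ s, hammingDist 0 s ≤ r ↔ s ∈ l := fun s => by
    rw [← List.mem_toFinset, hlB]; simp
  have hbad : ({L | L.rank = k ∧ (if hammingDist 0 α ≤ r then some α else none)
        ≠ l.find? (fun s => decide (L.mulVec s = L.mulVec α))} : Finset (Matrix (Fin k) (Fin n) _))
      ⊆ {L ∈ fullRankMatrices (ZMod 2) k n | ∃ s ∈ l.toFinset, s ≠ α ∧ L *ᵥ s = L *ᵥ α} := by
    intro L hL
    simp only [mem_filter, mem_univ, true_and, hmem] at hL
    obtain ⟨s, hs, hsα, hLs⟩ := List.exists_mem_ne_apply_eq_of_find?_ne hL.2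
    exact mem_filter.mpr ⟨mem_fullRankMatrices.mpr hL.1, s, List.mem_toFinset.mpr hs, hsα, hLs⟩
  have hcollide := card_fullRankMatrices_collision_mul_pow_lt hk hkn
    (S := l.toFinset) ⟨0, by simp [hlB]⟩ α
  rw [ZMod.card] at hcollide
  have hball := card_hammingBall_le_two_rpow h2r
  rw [← hlB] at hball
  have hN : (0 : ℝ) < #(fullRankMatrices (ZMod 2) k n) := by
    exact_mod_cast card_pos.mpr (fullRankMatrices_nonempty hkn)
  calc _ ≤ (#{L ∈ fullRankMatrices (ZMod 2) k n | ∃ s ∈ l.toFinset, s ≠ α ∧ L *ᵥ s = L *ᵥ α} : ℝ)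
          / #(fullRankMatrices (ZMod 2) k n) :=
        div_le_div_of_nonneg_right (by exact_mod_cast card_le_card hbad) hN.le
    _ < #l.toFinset / 2 ^ k := by
        rw [div_lt_div_iff₀ hN (by positivity)]
        exact_mod_cast hcollide
    _ ≤ 2 ^ ((n : ℝ) * binEnt (r / n)) / 2 ^ k := by gcongr
    _ = _ := by rw [Real.rpow_add zero_lt_two, Real.rpow_neg zero_le_two, Real.rpow_natCast]; ring

/-- For `n, k, r` with `2r ≤ n` and `1 ≤ k ≤ n`, and any `α ∈ F_2^n`:
if `L` is uniform among full-rank matrices in `F_2^{k×n}`, then the probability that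
`f_B(α) ≠ g_B(L, Lα)` is strictly less than `2^{−k + n·h(r/n)}`, where `B = B_n(0,r)`
is the Hamming ball of radius `r` around `0` (given by a duplicate-free enumeration `l`),
`f_B(α) = α` if `α ∈ B` and `⊥` otherwise, and `g_B(L, y)` is the first `s ∈ B` with
`Ls = y`, or `⊥` if none exists. -/
theorem stmt7 (n k r : ℕ) (h2r : 2 * r ≤ n) (hk : 1 ≤ k) (hkn : k ≤ n)
    (α : Fin n → ZMod 2) (l : List (Fin n → ZMod 2)) (hl : l.Nodup)
    (hlB : l.toFinset
      = Finset.univ.filter (fun s : Fin n → ZMod 2 => hammingDist 0 s ≤ r)) :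
    ((Finset.univ.filter (fun L : Matrix (Fin k) (Fin n) (ZMod 2) =>
        L.rank = k ∧
          (if hammingDist 0 α ≤ r then some α else none)
            ≠ l.find? (fun s => decide (L.mulVec s = L.mulVec α)))).card : ℝ)
      / ((Finset.univ.filter (fun L : Matrix (Fin k) (Fin n) (ZMod 2) =>
          L.rank = k)).card : ℝ)
      < (2 : ℝ) ^ (-(k : ℝ) + (n : ℝ) * binEnt ((r : ℝ) / (n : ℝ))) :=
  stmt7_general n k r h2r hk hkn α l hlB
end
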